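/- Let $n,k,r$ be integers with $1 < k < n-1$ and $1 \le r < \lfloor n/k \rfloor$, and let $P = \varphi^{-1}(\Delta_{n,k}^{stab(r)}) \subset \mathbb{R}^{n-1}$ be the image of $\Delta_{n,k}^{stab(r)}$ under the projection forgetting the last coordinate. Then $P$ equals the set of all $(x_1,\dots,x_{n-1}) \in \mathbb{R}^{n-1}$ satisfying: (i) $x_i \ge 0$ for all $i \in [n-1]$; (ii) $\sum_{i=1}^{n-1} x_i \le k$; (iii) $\sum_{i \in T} x_i \le 1$ for every cyclic window $T = \{\ell, \ell+1, \dots, \ell+r-1\} \pmod n$ with $n \notin T$; and (iv) $\sum_{i \in [n-1] \setminus T} x_i \ge k-1$ for every cyclic window $T = \{\ell, \ell+1, \dots, \ell+r-1\} \pmod n$ with $n \in T$. -/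

import Mathlib

open Finset
open scoped Pointwise

/-- The index `ℓ + i` taken modulo `n`, as an element of `Fin n`. -/
def cycIdx {n : ℕ} (ℓ : Fin n) (i : ℕ) : Fin n :=
  ⟨(ℓ.val + i) % n, Nat.mod_lt _ ℓ.pos⟩

/-- The cyclic distance between `i` and `j` on the cycle with `n` vertices. -/
def cycDist {n : ℕ} (i j : Fin n) : ℕ :=
  min ((i.val + n - j.val) % n) ((j.val + n - i.val) % n)

/-- `I` is an `r`-stable `k`-subset of `[n]`: it has `k` elements, any two distinct
ones at cyclic distance at least `r`. -/
def IsStable (n k r : ℕ) (I : Finset (Fin n)) : Prop :=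
  I.card = k ∧ ∀ i ∈ I, ∀ j ∈ I, i ≠ j → r ≤ cycDist i j

/-- The characteristic vector of `I ⊆ [n]`. -/
def charVec {n : ℕ} (I : Finset (Fin n)) : Fin n → ℝ :=
  fun i => if i ∈ I then 1 else 0

/-- The `r`-stable `n,k`-hypersimplex: the convex hull of the characteristic vectors
of the `r`-stable `k`-subsets of `[n]`. -/
noncomputable def stabHS (n k r : ℕ) : Set (Fin n → ℝ) :=
  convexHull ℝ (charVec '' {I : Finset (Fin n) | IsStable n k r I})

/-- Sum of the `r` cyclically consecutive coordinates `x ℓ, x (ℓ+1), …, x (ℓ+r-1)`,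
indices modulo `n`. -/
def wSum {n : ℕ} (r : ℕ) (ℓ : Fin n) (x : Fin n → ℝ) : ℝ :=
  ∑ i ∈ Finset.range r, x (cycIdx ℓ i)

/-- The image of the `r`-stable hypersimplex under the projection `ℝⁿ → ℝⁿ⁻¹` forgetting
the last coordinate (the inverse of the affine isomorphism `φ`). -/
noncomputable def projP (n k r : ℕ) : Set (Fin (n - 1) → ℝ) :=
  (fun x : Fin n → ℝ => fun i : Fin (n - 1) => x (Fin.castLE (Nat.sub_le n 1) i)) ''
    stabHS n k r

/-- The translated dilate `Q = q·P - (1,…,1)` of `P = projP n k r`. -/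
noncomputable def Qpoly (n k r q : ℕ) : Set (Fin (n - 1) → ℝ) :=
  (fun y : Fin (n - 1) → ℝ => (q : ℝ) • y - 1) '' projP n k r

/-- The polar set `{y : ⟨x,y⟩ ≤ 1 for all x ∈ Q}`. -/
def polarQ {m : ℕ} (Q : Set (Fin m → ℝ)) : Set (Fin m → ℝ) :=
  {y | ∀ x ∈ Q, (∑ i, x i * y i) ≤ 1}

/-- The cyclic window `T = {ℓ, ℓ+1, …, ℓ+r-1}` (indices mod `n`) as a subset of `Fin n`. -/
def windowF {n : ℕ} (r : ℕ) (ℓ : Fin n) : Finset (Fin n) :=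
  (Finset.range r).image (cycIdx ℓ)

/-- Extend `y : ℝⁿ⁻¹` to `ℝⁿ` by `0` in the last coordinate (used to express sums of
coordinates of `y` over subsets of `[n]` not containing `n`). -/
def ext0 {n : ℕ} (y : Fin (n - 1) → ℝ) : Fin n → ℝ :=
  fun j => if h : (j : ℕ) < n - 1 then y ⟨(j : ℕ), h⟩ else 0

/-!
For `1 ≤ r ≤ n` the stable hypersimplex is cut out by `x ≥ 0`, `∑ x = k` and the window
inequalities `∑_{j ∈ T} x_j ≤ 1`; the theorem is this description transported through `φ`, a
window `T` containing `n` turning into `x_n = k - ∑_{j ∉ T} x_j ≤ 1`.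

A window of length `r` meets an `r`-stable set at most once, so the vertices satisfy the window
inequalities. Conversely, given such an `x`, let `C_t` be the partial sums of its periodic
extension and, for `u ∈ (0, 1]`, let `S(u)` be the set of `i` with an integer in
`(C_i + u, C_{i+1} + u]` (systematic sampling). As `x_i ≤ 1` and `C_n = k`, `|S(u)| = k`. Two
elements of `S(u)` at cyclic distance `d < r` would put two integers in an interval of length a
window sum `≤ 1`, so `S(u)` is `r`-stable. Finally `i ∈ S(u)` for a set of `u` of measure `x_i`,
so `x = ∫ charVec (S u) du` lies in the convex hull of the stable vertices.
-/

namespace StableHypersimplex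

variable {n : ℕ}

lemma cycIdx_eq_ofNat [NeZero n] (ℓ : Fin n) (d : ℕ) : cycIdx ℓ d = Fin.ofNat n (ℓ + d) :=
  Fin.ext (by simp [cycIdx])

lemma cycIdx_zero (ℓ : Fin n) : cycIdx ℓ 0 = ℓ :=
  Fin.ext (by simp [cycIdx, Nat.mod_eq_of_lt ℓ.isLt])

lemma cycIdx_cycIdx (ℓ : Fin n) (a b : ℕ) : cycIdx (cycIdx ℓ a) b = cycIdx ℓ (a + b) :=
  Fin.ext (by simp [cycIdx, Nat.mod_add_mod, add_assoc])

lemma cycIdx_injOn (ℓ : Fin n) : Set.InjOn (cycIdx ℓ) (Set.Iio n) := by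
  intro a ha b hb h
  have h' : (ℓ + a) % n = (ℓ + b) % n := congrArg Fin.val h
  have hab : a % n = b % n := Nat.ModEq.add_left_cancel' _ h'
  rwa [Nat.mod_eq_of_lt (show a < n from ha), Nat.mod_eq_of_lt (show b < n from hb)] at hab

lemma cycIdx_mod_sub (i j : Fin n) : cycIdx i ((j + n - i) % n) = j := by
  refine Fin.ext ?_
  simp only [cycIdx, Nat.add_mod_mod]
  rw [show (i : ℕ) + (j + n - i) = j + n by omega, Nat.add_mod_right, Nat.mod_eq_of_lt j.isLt]

lemma cycDist_cycIdx_le (i : Fin n) {d : ℕ} (hd : d < n) : cycDist i (cycIdx i d) ≤ d := by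
  refine (min_le_right _ _).trans (le_of_eq ?_)
  simp only [cycIdx]
  rcases lt_or_ge (i + d) n with h | h
  · rw [Nat.mod_eq_of_lt h, show (i : ℕ) + d + n - i = d + n by omega, Nat.add_mod_right,
      Nat.mod_eq_of_lt hd]
  · rw [Nat.mod_eq_sub_mod h, Nat.mod_eq_of_lt (show (i : ℕ) + d - n < n by omega),
      show (i : ℕ) + d - n + n - i = d by omega, Nat.mod_eq_of_lt hd]

lemma card_windowF_inter_le_one {k r : ℕ} {I : Finset (Fin n)} (hI : IsStable n k r I)
    (hrn : r ≤ n) (ℓ : Fin n) : #(windowF r ℓ ∩ I) ≤ 1 := by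
  suffices ∀ a b, a < b → b < r → cycIdx ℓ a ∈ I → cycIdx ℓ b ∉ I by
    refine Finset.card_le_one.2 fun p hp q hq => ?_
    simp only [windowF, Finset.mem_inter, Finset.mem_image, Finset.mem_range] at hp hq
    obtain ⟨⟨a, ha, rfl⟩, hpI⟩ := hp
    obtain ⟨⟨b, hb, rfl⟩, hqI⟩ := hq
    rcases lt_trichotomy a b with hab | rfl | hab
    · exact absurd hqI (this a b hab hb hpI)
    · rfl
    · exact absurd hpI (this b a hab ha hqI)
  intro a b hab hb ha hbI
  have hne : cycIdx ℓ a ≠ cycIdx ℓ b := fun h =>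
    hab.ne (cycIdx_injOn ℓ (show a < n by omega) (show b < n by omega) h)
  have hdist := hI.2 _ ha _ hbI hne
  rw [show b = a + (b - a) by omega, ← cycIdx_cycIdx] at hdist
  have := cycDist_cycIdx_le (cycIdx ℓ a) (show b - a < n by omega)
  omega

lemma le_one_of_sum_windowF_le_one {x : Fin n → ℝ} {r : ℕ} (hr : 1 ≤ r) (hx0 : ∀ i, 0 ≤ x i)
    (hw : ∀ ℓ, ∑ j ∈ windowF r ℓ, x j ≤ 1) (i : Fin n) : x i ≤ 1 :=
  calc x i ≤ ∑ j ∈ windowF r i, x j :=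
        single_le_sum (fun j _ => hx0 j) (mem_image.2 ⟨0, mem_range.2 hr, cycIdx_zero i⟩)
    _ ≤ 1 := hw i

section CumulativeSums

variable [NeZero n] (x : Fin n → ℝ)

def cumSum (t : ℕ) : ℝ := ∑ s ∈ range t, x (Fin.ofNat n s)

lemma cumSum_succ (t : ℕ) : cumSum x (t + 1) = cumSum x t + x (Fin.ofNat n t) :=
  sum_range_succ _ _

lemma cumSum_mono {x : Fin n → ℝ} (hx0 : ∀ i, 0 ≤ x i) : Monotone (cumSum x) := fun _ _ hab =>
  sum_le_sum_of_subset_of_nonneg (range_subset_range.2 hab) fun _ _ _ => hx0 _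

lemma cumSum_self : cumSum x n = ∑ i, x i := by
  rw [cumSum, ← Fin.sum_univ_eq_sum_range (fun s => x (Fin.ofNat n s))]
  simp

lemma cumSum_add_self (t : ℕ) : cumSum x (t + n) = cumSum x t + ∑ i, x i := by
  rw [add_comm t, cumSum, sum_range_add, ← cumSum, cumSum_self, add_comm]
  congr 1
  refine sum_congr rfl fun s _ => congrArg x (Fin.ext ?_)
  simp [Nat.add_mod_left]

lemma sum_windowF_eq_sub_cumSum {r : ℕ} (hrn : r ≤ n) (ℓ : Fin n) :
    ∑ j ∈ windowF r ℓ, x j = cumSum x (ℓ + r) - cumSum x ℓ := by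
  rw [windowF, sum_image fun a ha b hb h => cycIdx_injOn ℓ
    ((mem_range.1 ha).trans_le hrn) ((mem_range.1 hb).trans_le hrn) h, cumSum, sum_range_add,
    ← cumSum, add_sub_cancel_left]
  simp only [cycIdx_eq_ofNat]

end CumulativeSums

section Crossings

variable [NeZero n] {x : Fin n → ℝ}

noncomputable def ceilCumSum (x : Fin n → ℝ) (u : ℝ) (t : ℕ) : ℤ := ⌈cumSum x t + u⌉

noncomputable def crossingSet (x : Fin n → ℝ) (u : ℝ) : Finset (Fin n) :=
  {i | ceilCumSum x u i < ceilCumSum x u (i + 1)}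

lemma mem_crossingSet {u : ℝ} {i : Fin n} :
    i ∈ crossingSet x u ↔ ceilCumSum x u i < ceilCumSum x u (i + 1) := by
  simp [crossingSet]

lemma ceilCumSum_mono (hx0 : ∀ i, 0 ≤ x i) (u : ℝ) : Monotone (ceilCumSum x u) :=
  fun _ _ hab => Int.ceil_mono (by gcongr; exact cumSum_mono hx0 hab)

lemma ceilCumSum_succ_le (hx1 : ∀ i, x i ≤ 1) (u : ℝ) (t : ℕ) :
    ceilCumSum x u (t + 1) ≤ ceilCumSum x u t + 1 := by
  rw [ceilCumSum, ceilCumSum, ← Int.ceil_add_one, cumSum_succ]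
  exact Int.ceil_mono (by linarith [hx1 (Fin.ofNat n t)])

lemma ceilCumSum_add_mul {k : ℕ} (hsum : ∑ i, x i = k) (u : ℝ) (t q : ℕ) :
    ceilCumSum x u (t + n * q) = ceilCumSum x u t + q * k := by
  induction q with
  | zero => simp
  | succ q ih =>
    rw [mul_add_one, ← add_assoc, ceilCumSum, cumSum_add_self, hsum, add_right_comm,
      Int.ceil_add_natCast, ← ceilCumSum, ih]
    push_cast
    ring

lemma ofNat_mem_crossingSet_iff {k : ℕ} (hsum : ∑ i, x i = k) (u : ℝ) (t : ℕ) :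
    Fin.ofNat n t ∈ crossingSet x u ↔ ceilCumSum x u t < ceilCumSum x u (t + 1) := by
  conv_rhs => rw [← Nat.mod_add_div t n, add_right_comm, ceilCumSum_add_mul hsum,
    ceilCumSum_add_mul hsum, add_lt_add_iff_right]
  simp [mem_crossingSet]

lemma card_crossingSet {k : ℕ} (hx0 : ∀ i, 0 ≤ x i) (hx1 : ∀ i, x i ≤ 1)
    (hsum : ∑ i, x i = k) (u : ℝ) : #(crossingSet x u) = k := by
  set c := ceilCumSum x u
  have hstep : ∀ t : ℕ, (if c t < c (t + 1) then 1 else 0 : ℤ) = c (t + 1) - c t := by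
    intro t
    have h1 : c t ≤ c (t + 1) := ceilCumSum_mono hx0 u (t.le_add_right 1)
    have h2 : c (t + 1) ≤ c t + 1 := ceilCumSum_succ_le hx1 u t
    split_ifs <;> omega
  have hends : c n = c 0 + k := by simpa using ceilCumSum_add_mul hsum u 0 1
  zify
  calc (#(crossingSet x u) : ℤ) = ∑ i : Fin n, (if c i < c (i + 1) then 1 else 0 : ℤ) := by
        rw [crossingSet, card_filter]
        push_cast
        rfl
    _ = ∑ t ∈ range n, (c (t + 1) - c t) := by
        rw [← Fin.sum_univ_eq_sum_range (fun t => c (t + 1) - c t)]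
        exact sum_congr rfl fun i _ => hstep i
    _ = k := by rw [sum_range_sub, hends]; ring

lemma add_one_lt_of_ceil_add_two_le {a b : ℝ} (h : ⌈a⌉ + 2 ≤ ⌈b⌉) : a + 1 < b := by
  have ha := Int.le_ceil a
  have hb := Int.ceil_lt_add_one b
  have hab : (⌈a⌉ : ℝ) + 2 ≤ ⌈b⌉ := by exact_mod_cast h
  linarith

lemma le_mod_sub_of_mem_crossingSet {k r : ℕ} (hx0 : ∀ i, 0 ≤ x i) (hsum : ∑ i, x i = k)
    (hrn : r ≤ n) (hw : ∀ ℓ, ∑ j ∈ windowF r ℓ, x j ≤ 1) {u : ℝ} {i j : Fin n}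
    (hi : i ∈ crossingSet x u) (hj : j ∈ crossingSet x u) (hij : i ≠ j) :
    r ≤ (j + n - i) % n := by
  set d := (j + n - i) % n with hd
  have hd0 : d ≠ 0 := fun h => hij (by rw [← cycIdx_mod_sub i j, ← hd, h, cycIdx_zero])
  have hi' : ceilCumSum x u i < ceilCumSum x u (i + 1) := mem_crossingSet.1 hi
  have hj' : ceilCumSum x u (i + d) < ceilCumSum x u (i + d + 1) := by
    rwa [← ofNat_mem_crossingSet_iff hsum, ← cycIdx_eq_ofNat, hd, cycIdx_mod_sub]
  have hmid := ceilCumSum_mono hx0 u (show (i : ℕ) + 1 ≤ i + d by omega)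
  by_contra! hdr
  have hgap := add_one_lt_of_ceil_add_two_le
    (show ceilCumSum x u i + 2 ≤ ceilCumSum x u (i + d + 1) by omega)
  have hwin := hw i
  rw [sum_windowF_eq_sub_cumSum x hrn] at hwin
  have := cumSum_mono hx0 (show (i : ℕ) + d + 1 ≤ i + r by omega)
  linarith

lemma isStable_crossingSet {k r : ℕ} (hr : 1 ≤ r) (hrn : r ≤ n) (hx0 : ∀ i, 0 ≤ x i)
    (hsum : ∑ i, x i = k) (hw : ∀ ℓ, ∑ j ∈ windowF r ℓ, x j ≤ 1) (u : ℝ) :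
    IsStable n k r (crossingSet x u) :=
  ⟨card_crossingSet hx0 (le_one_of_sum_windowF_le_one hr hx0 hw) hsum u, fun _ hi _ hj hij =>
    le_min (le_mod_sub_of_mem_crossingSet hx0 hsum hrn hw hj hi hij.symm)
      (le_mod_sub_of_mem_crossingSet hx0 hsum hrn hw hi hj hij)⟩

end Crossings

open MeasureTheory

lemma integral_ite_ceil_lt_ceil {a b : ℝ} (hab : a ≤ b) (hba : b ≤ a + 1) :
    ∫ u in (0 : ℝ)..1, (if ⌈a + u⌉ < ⌈b + u⌉ then (1 : ℝ) else 0) = b - a := by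
  have hper : Function.Periodic (fun u : ℝ => if ⌈a + u⌉ < ⌈b + u⌉ then (1 : ℝ) else 0) 1 := by
    intro u
    simp only [← add_assoc, Int.ceil_add_one, add_lt_add_iff_right]
  -- by periodicity, integrate over `(-a, 1 - a]` instead, where `⌈a + u⌉ = 1`
  have hshift : Set.EqOn (fun u : ℝ => if ⌈a + u⌉ < ⌈b + u⌉ then (1 : ℝ) else 0)
      ((Set.Ioi (1 - b)).indicator fun _ => 1) (Set.Ioc (-a) (-a + 1)) := by
    intro u hu
    have h1 : ⌈a + u⌉ = 1 := Int.ceil_eq_iff.2 ⟨by push_cast; linarith [hu.1], by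
      push_cast; linarith [hu.2]⟩
    simp only [h1, Int.lt_ceil, Set.indicator, Set.mem_Ioi, Int.cast_one, sub_lt_iff_lt_add,
      add_comm u]
  have hshifted := hper.intervalIntegral_add_eq 0 (-a)
  rw [zero_add] at hshifted
  rw [hshifted, intervalIntegral.integral_of_le (by linarith),
    setIntegral_congr_fun measurableSet_Ioc hshift, integral_indicator measurableSet_Ioi,
    Measure.restrict_restrict measurableSet_Ioi, Set.inter_comm, Set.Ioc_inter_Ioi,
    max_eq_right (by linarith), setIntegral_const, Real.volume_real_Ioc_of_le (by linarith),
    smul_eq_mul, mul_one]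
  ring

theorem mem_stabHS {k r : ℕ} (hr : 1 ≤ r) (hrn : r ≤ n) {x : Fin n → ℝ} (hx0 : ∀ i, 0 ≤ x i)
    (hsum : ∑ i, x i = k) (hw : ∀ ℓ, ∑ j ∈ windowF r ℓ, x j ≤ 1) : x ∈ stabHS n k r := by
  have : NeZero n := ⟨by omega⟩
  let μ := volume.restrict (Set.Ioc (0 : ℝ) 1)
  have : IsProbabilityMeasure μ := ⟨by simp [μ]⟩
  let f : ℝ → Fin n → ℝ := fun u => charVec (crossingSet x u)
  have hf : ∀ i u, f u i = if ⌈cumSum x i + u⌉ < ⌈cumSum x (i + 1) + u⌉ then 1 else 0 := by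
    simp only [f, charVec, mem_crossingSet, ceilCumSum, implies_true]
  have hfi : ∀ i, Integrable (f · i) μ := by
    intro i
    simp_rw [hf]
    refine Integrable.of_bound (Measurable.aestronglyMeasurable ?_) 1
      (ae_of_all _ fun u => by split_ifs <;> simp)
    exact Measurable.ite (measurableSet_lt (by fun_prop) (by fun_prop)) measurable_const
      measurable_const
  have hmean : ∫ u, f u ∂μ = x := by
    funext i
    have hxi := le_one_of_sum_windowF_le_one hr hx0 hw i
    rw [eval_integral hfi, ← intervalIntegral.integral_of_le zero_le_one]
    simp_rw [hf]
    rw [integral_ite_ceil_lt_ceil] <;> simp [cumSum_succ, hx0 i, hxi]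
  rw [← hmean]
  exact (convex_convexHull ℝ _).integral_mem ((Set.toFinite _).isClosed_convexHull (𝕜 := ℝ))
    (ae_of_all _ fun u => subset_convexHull ℝ _
      ⟨crossingSet x u, isStable_crossingSet hr hrn hx0 hsum hw u, rfl⟩)
    (integrable_pi_iff.2 hfi)

def windowPolytope (n k r : ℕ) : Set (Fin n → ℝ) :=
  {x | (∀ i, 0 ≤ x i) ∧ ∑ i, x i = k ∧ ∀ ℓ, ∑ j ∈ windowF r ℓ, x j ≤ 1}

lemma convex_windowPolytope (k r : ℕ) : Convex ℝ (windowPolytope n k r) := by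
  rintro x ⟨hx0, hxs, hxw⟩ y ⟨hy0, hys, hyw⟩ a b ha hb hab
  simp only [windowPolytope, Set.mem_ofPred_eq, Pi.add_apply, Pi.smul_apply, smul_eq_mul,
    sum_add_distrib, ← mul_sum]
  refine ⟨fun i => add_nonneg (mul_nonneg ha (hx0 i)) (mul_nonneg hb (hy0 i)),
    by rw [hxs, hys, ← add_mul, hab, one_mul], fun ℓ => ?_⟩
  nlinarith [hxw ℓ, hyw ℓ]

lemma charVec_mem_windowPolytope {k r : ℕ} {I : Finset (Fin n)} (hI : IsStable n k r I)
    (hrn : r ≤ n) : charVec I ∈ windowPolytope n k r := by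
  refine ⟨fun i => ?_, ?_, fun ℓ => ?_⟩
  · unfold charVec
    split_ifs <;> norm_num
  · simp [charVec, hI.1]
  · simp only [charVec, sum_boole, filter_mem_eq_inter]
    exact_mod_cast card_windowF_inter_le_one hI hrn ℓ

theorem stabHS_eq_windowPolytope {k r : ℕ} (hr : 1 ≤ r) (hrn : r ≤ n) :
    stabHS n k r = windowPolytope n k r :=
  Set.Subset.antisymm
    (convexHull_min (by rintro _ ⟨I, hI, rfl⟩; exact charVec_mem_windowPolytope hI hrn)
      (convex_windowPolytope k r))
    fun _ ⟨hx0, hsum, hw⟩ => mem_stabHS hr hrn hx0 hsum hw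

section Projection

def dropLast (x : Fin n → ℝ) : Fin (n - 1) → ℝ := fun i => x (Fin.castLE (Nat.sub_le n 1) i)

/-- The affine isomorphism `φ` onto the hyperplane `∑ x = k`. -/
noncomputable def phi (k : ℝ) (y : Fin (n - 1) → ℝ) : Fin n → ℝ :=
  fun j => if h : (j : ℕ) < n - 1 then y ⟨j, h⟩ else k - ∑ i, y i

variable {k : ℝ} {y : Fin (n - 1) → ℝ}

lemma sum_univ_eq_sum_castLE_add_last (hn : 0 < n) (g : Fin n → ℝ) :
    ∑ j, g j = ∑ i : Fin (n - 1), g (Fin.castLE (Nat.sub_le n 1) i) + g ⟨n - 1, by omega⟩ := by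
  obtain ⟨m, rfl⟩ : ∃ m, n = m + 1 := ⟨n - 1, by omega⟩
  exact Fin.sum_univ_castSucc g

lemma dropLast_phi : dropLast (phi k y) = y :=
  funext fun i => by simp [dropLast, phi, i.isLt]

lemma phi_last (hn : 0 < n) : phi k y ⟨n - 1, by omega⟩ = k - ∑ i, y i := by
  simp [phi]

lemma phi_of_ne {j : Fin n} (hj : (j : ℕ) ≠ n - 1) : phi k y j = ext0 y j := by
  have : (j : ℕ) < n - 1 := by omega
  simp [phi, ext0, this]

lemma sum_phi (hn : 0 < n) : ∑ j, phi k y j = k := by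
  rw [sum_univ_eq_sum_castLE_add_last hn, phi_last hn]
  simp only [← dropLast.eq_def (phi k y), dropLast_phi]
  ring

lemma phi_dropLast (hn : 0 < n) {x : Fin n → ℝ} (hx : ∑ j, x j = k) : phi k (dropLast x) = x := by
  funext j
  by_cases hj : (j : ℕ) < n - 1
  · simp [phi, dropLast, hj]
  · rw [show j = ⟨n - 1, Nat.sub_lt hn one_pos⟩ from Fin.ext (by simp only; omega), phi_last hn,
      ← hx, sum_univ_eq_sum_castLE_add_last hn]
    simp [dropLast]

lemma mem_dropLast_image_iff (hn : 0 < n) {S : Set (Fin n → ℝ)} (hS : ∀ x ∈ S, ∑ j, x j = k) :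
    y ∈ dropLast '' S ↔ phi k y ∈ S :=
  ⟨by rintro ⟨x, hx, rfl⟩; rwa [phi_dropLast hn (hS x hx)], fun h => ⟨_, h, dropLast_phi⟩⟩

lemma sum_phi_of_last_notMem (hn : 0 < n) {W : Finset (Fin n)} (hW : ⟨n - 1, by omega⟩ ∉ W) :
    ∑ j ∈ W, phi k y j = ∑ j ∈ W, ext0 y j :=
  sum_congr rfl fun j hj => phi_of_ne fun h =>
    hW (by rwa [show j = ⟨n - 1, _⟩ from Fin.ext h] at hj)

lemma sum_phi_of_last_mem (hn : 0 < n) {W : Finset (Fin n)} (hW : ⟨n - 1, by omega⟩ ∈ W) :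
    ∑ j ∈ W, phi k y j = k - ∑ j ∈ univ \ W, ext0 y j := by
  have h := sum_sdiff (f := phi k y) (subset_univ W)
  rw [sum_phi hn, sum_phi_of_last_notMem hn (by simp [hW])] at h
  linarith

end Projection

lemma phi_mem_windowPolytope_iff {k r : ℕ} (hn : 0 < n) {y : Fin (n - 1) → ℝ} :
    phi k y ∈ windowPolytope n k r ↔
      (∀ i, 0 ≤ y i) ∧ ∑ i, y i ≤ (k : ℝ) ∧
      (∀ ℓ : Fin n, (⟨n - 1, by omega⟩ : Fin n) ∉ windowF r ℓ →
        ∑ j ∈ windowF r ℓ, ext0 y j ≤ 1) ∧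
      (∀ ℓ : Fin n, (⟨n - 1, by omega⟩ : Fin n) ∈ windowF r ℓ →
        (k : ℝ) - 1 ≤ ∑ j ∈ univ \ windowF r ℓ, ext0 y j) := by
  have hnonneg : (∀ j, 0 ≤ phi k y j) ↔ (∀ i, 0 ≤ y i) ∧ ∑ i, y i ≤ k := by
    refine ⟨fun h => ⟨fun i => ?_, ?_⟩, fun h j => ?_⟩
    · simpa [phi, i.isLt] using h (Fin.castLE (Nat.sub_le n 1) i)
    · linarith [phi_last hn (k := k) (y := y) ▸ h ⟨n - 1, by omega⟩]
    · unfold phi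
      split_ifs
      exacts [h.1 _, by linarith [h.2]]
  have hwin : ∀ ℓ, ∑ j ∈ windowF r ℓ, phi k y j ≤ 1 ↔
      ((⟨n - 1, by omega⟩ : Fin n) ∉ windowF r ℓ → ∑ j ∈ windowF r ℓ, ext0 y j ≤ 1) ∧
      ((⟨n - 1, by omega⟩ : Fin n) ∈ windowF r ℓ →
        (k : ℝ) - 1 ≤ ∑ j ∈ univ \ windowF r ℓ, ext0 y j) := by
    intro ℓ
    by_cases h : (⟨n - 1, by omega⟩ : Fin n) ∈ windowF r ℓ
    · rw [sum_phi_of_last_mem hn h]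
      simp only [h, not_true_eq_false, false_imp_iff, true_imp_iff, true_and]
      constructor <;> intro <;> linarith
    · simp [sum_phi_of_last_notMem hn h, h]
  simp only [windowPolytope, Set.mem_ofPred_eq, hnonneg, sum_phi hn, hwin, forall_and, true_and,
    and_assoc]

end StableHypersimplex

open StableHypersimplex

/-- for `1 < k < n-1` and `1 ≤ r < ⌊n/k⌋`, the projection
`P = φ⁻¹(Δ_{n,k}^{stab(r)}) ⊂ ℝⁿ⁻¹` is exactly the set of `y` with (i) all coordinates
nonnegative, (ii) coordinate sum at most `k`, (iii) `∑_{i∈T} y_i ≤ 1` for every cyclic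
window `T` of length `r` not containing `n`, and (iv) `∑_{i∈[n-1]∖T} y_i ≥ k-1` for every
cyclic window `T` of length `r` containing `n`. -/
theorem stmt14 (n k r : ℕ) (hkn : k < n - 1) (hr1 : 1 ≤ r) (hr2 : r < n / k) :
    projP n k r = {y : Fin (n - 1) → ℝ |
      (∀ i, 0 ≤ y i) ∧
      (∑ i, y i) ≤ (k : ℝ) ∧
      (∀ ℓ : Fin n, (⟨n - 1, by omega⟩ : Fin n) ∉ windowF r ℓ →
        (∑ j ∈ windowF r ℓ, ext0 y j) ≤ 1) ∧
      (∀ ℓ : Fin n, (⟨n - 1, by omega⟩ : Fin n) ∈ windowF r ℓ →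
        (k : ℝ) - 1 ≤ ∑ j ∈ Finset.univ \ windowF r ℓ, ext0 y j)} := by
  have hn : 0 < n := by omega
  have hrn : r ≤ n := hr2.le.trans (Nat.div_le_self n k)
  ext y
  change y ∈ dropLast '' stabHS n k r ↔ _
  rw [stabHS_eq_windowPolytope hr1 hrn, mem_dropLast_image_iff hn fun x hx => hx.2.1]
  exact phi_mem_windowPolytope_iff hn
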